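/- arXiv:2008.02963 — 9 statements merged into one kernel-verified Lean document; each statement's English description precedes it below -/
import Mathlib

section
/- Let f ≥ 2 and let f̄ = ⌊(f-1)/2⌋. For any subset T of the interval [f - f̄, f - 1], the set S = {0} ∪ T ∪ {f+1, f+2, ...} is a numerical semigroup. -/
/-- A numerical semigroup: a subset of ℕ containing 0, closed under addition,
with finite complement. -/
def IsNumericalSemigroup (S : Set ℕ) : Prop :=
  0 ∈ S ∧ (∀ a ∈ S, ∀ b ∈ S, a + b ∈ S) ∧ Sᶜ.Finite

/-- The Frobenius number: the largest gap. -/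
noncomputable def frob (S : Set ℕ) : ℕ := sSup Sᶜ

/-- The multiplicity: the smallest nonzero element. -/
noncomputable def mult (S : Set ℕ) : ℕ := sInf (S \ {0})

/-- The genus: the number of gaps. -/
noncomputable def genus (S : Set ℕ) : ℕ := Sᶜ.ncard

/-- The depth `⌈(f+1)/m⌉`, written as `(f + m) / m` using ℕ-division. -/
noncomputable def depth (S : Set ℕ) : ℕ := (frob S + mult S) / mult S

theorem stmt_4 (f : ℕ) (hf : 2 ≤ f) (T : Set ℕ)
    (hT : T ⊆ Set.Icc (f - (f - 1) / 2) (f - 1)) :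
    IsNumericalSemigroup ({0} ∪ T ∪ {n : ℕ | f + 1 ≤ n}) := by
  have hTlo : ∀ a ∈ T, f - (f - 1) / 2 ≤ a := fun a ha => (hT ha).1
  have hbig : ∀ a ∈ T, ∀ b ∈ T, f + 1 ≤ a + b := by
    intro a ha b hb
    have h1 := (hT ha).1
    have h2 := (hT hb).1
    have : 2 * ((f - 1) / 2) ≤ f - 1 := by omega
    omega
  refine ⟨Or.inl (Or.inl rfl), ?_, ?_⟩
  · rintro a (⟨rfl | ha⟩ | ha) b (⟨rfl | hb⟩ | hb)
    · exact Or.inl (Or.inl rfl)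
    · exact Or.inl (Or.inr (by simpa using hb))
    · exact Or.inr (by simpa using hb)
    · exact Or.inl (Or.inr (by simpa using ha))
    · exact Or.inr (hbig a ha b hb)
    · exact Or.inr (by simp at hb ⊢; omega)
    · exact Or.inr (by simp at ha ⊢; omega)
    · exact Or.inr (by simp at ha ⊢; omega)
    · exact Or.inr (by simp at ha hb ⊢; omega)
  · apply Set.Finite.subset (Set.finite_Iic f)
    intro n hn
    simp only [Set.mem_compl_iff, Set.mem_union, Set.mem_setOf_eq, not_or] at hn
    simp only [Set.mem_Iic]
    omega
end

section
/- The number of numerical semigroups of depth 2 with Frobenius number f is exactly 2^⌊(f-1)/2⌋ - 1. -/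
theorem stmt_5 (f : ℕ) (hf : 1 ≤ f) :
    Set.ncard {S : Set ℕ | IsNumericalSemigroup S ∧ frob S = f ∧ depth S = 2} =
      2 ^ ((f - 1) / 2) - 1 := by
  classical
  set I : Finset ℕ := Finset.Ioc (f / 2) (f - 1) with hI
  set Φ : Finset ℕ → Set ℕ := fun A => {0} ∪ ↑A ∪ Set.Ici (f + 1) with hΦ
  have hmem : ∀ (A : Finset ℕ) (n : ℕ), n ∈ Φ A ↔ n = 0 ∨ n ∈ A ∨ f + 1 ≤ n := by
    intro A n
    simp [hΦ, Set.mem_Ici, or_assoc]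
  -- key set equality
  have key : {S : Set ℕ | IsNumericalSemigroup S ∧ frob S = f ∧ depth S = 2}
      = Φ '' {A : Finset ℕ | A ⊆ I ∧ A.Nonempty} := by
    ext S
    simp only [Set.mem_setOf_eq, Set.mem_image]
    constructor
    · rintro ⟨⟨h0, hadd, hfin⟩, hfrob, hdep⟩
      have hne : Sᶜ.Nonempty := by
        rcases Set.eq_empty_or_nonempty Sᶜ with he | hne
        · rw [frob, he, csSup_empty] at hfrob
          simp at hfrob
          omega
        · exact hne
      have hfS : f ∉ S := by
        have := hne.csSup_mem hfin
        rw [← frob, hfrob] at this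
        exact this
      have hgt : ∀ n, f < n → n ∈ S := by
        intro n hn
        by_contra h
        have : n ≤ sSup Sᶜ := le_csSup hfin.bddAbove h
        rw [← frob, hfrob] at this
        omega
      have hS0 : (S \ {0}).Nonempty := ⟨f + 1, hgt _ (by omega), by simp⟩
      have hm : mult S ∈ S \ {0} := Nat.sInf_mem hS0
      have hmpos : 0 < mult S := Nat.pos_of_ne_zero (by exact fun h => hm.2 h)
      rw [depth, hfrob] at hdep
      set m := mult S with hmdef
      have h1 : 2 * m ≤ f + m := (Nat.le_div_iff_mul_le hmpos).mp (le_of_eq hdep.symm)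
      have h2 : f + m < 3 * m := (Nat.div_lt_iff_lt_mul hmpos).mp (by omega)
      have hmf : m ≤ f := by omega
      have hmf2 : f < 2 * m := by omega
      have hmle : ∀ n ∈ S, n ≠ 0 → m ≤ n := fun n hn hn0 => Nat.sInf_le ⟨hn, hn0⟩
      refine ⟨I.filter (· ∈ S), ⟨Finset.filter_subset _ _, ⟨m, ?_⟩⟩, ?_⟩
      · simp only [Finset.mem_filter, hI, Finset.mem_Ioc]
        have : m ≠ f := fun h => hfS (h ▸ hm.1)
        exact ⟨⟨by omega, by omega⟩, hm.1⟩
      · ext n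
        rw [hmem]
        simp only [Finset.mem_filter, hI, Finset.mem_Ioc]
        constructor
        · rintro (rfl | ⟨_, hn⟩ | h)
          · exact h0
          · exact hn
          · exact hgt n (by omega)
        · intro hn
          rcases eq_or_ne n 0 with rfl | hn0
          · exact Or.inl rfl
          rcases le_or_gt (f + 1) n with h | h
          · exact Or.inr (Or.inr h)
          · have hnm : m ≤ n := hmle n hn hn0
            have : n ≠ f := fun h => hfS (h ▸ hn)
            exact Or.inr (Or.inl ⟨⟨by omega, by omega⟩, hn⟩)
    · rintro ⟨A, ⟨hAI, hAne⟩, rfl⟩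
      have hAb : ∀ a ∈ A, f / 2 < a ∧ a ≤ f - 1 := by
        intro a ha
        have := hAI ha
        rw [hI, Finset.mem_Ioc] at this
        exact this
      have hSmem := hmem A
      have h0 : (0 : ℕ) ∈ Φ A := (hSmem 0).mpr (Or.inl rfl)
      have hadd : ∀ a ∈ Φ A, ∀ b ∈ Φ A, a + b ∈ Φ A := by
        intro a ha b hb
        rw [hSmem] at ha hb ⊢
        have ha' : a = 0 ∨ f + 1 ≤ 2 * a := by
          rcases ha with rfl | ha | ha
          · exact Or.inl rfl
          · have := (hAb a ha).1; omega
          · omega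
        have hb' : b = 0 ∨ f + 1 ≤ 2 * b := by
          rcases hb with rfl | hb | hb
          · exact Or.inl rfl
          · have := (hAb b hb).1; omega
          · omega
        rcases ha' with rfl | ha'
        · simpa using hb
        rcases hb' with rfl | hb'
        · simpa using ha
        · exact Or.inr (Or.inr (by omega))
      have hfin : (Φ A)ᶜ.Finite := by
        apply (Set.finite_Iio (f + 1)).subset
        intro n hn
        rw [Set.mem_compl_iff, hSmem] at hn
        push_neg at hn
        exact hn.2.2
      have hfnot : f ∉ Φ A := by
        rw [hSmem]
        push_neg
        refine ⟨by omega, fun h => ?_, by omega⟩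
        have := (hAb f h).2
        omega
      have hfrob : frob (Φ A) = f := by
        rw [frob]
        apply le_antisymm
        · apply csSup_le ⟨f, hfnot⟩
          intro n hn
          by_contra h
          exact hn ((hSmem n).mpr (Or.inr (Or.inr (by omega))))
        · exact le_csSup hfin.bddAbove hfnot
      refine ⟨⟨h0, hadd, hfin⟩, hfrob, ?_⟩
      obtain ⟨a0, ha0⟩ := hAne
      have ha0b := hAb a0 ha0
      have hne' : (Φ A \ {0}).Nonempty :=
        ⟨a0, (hSmem a0).mpr (Or.inr (Or.inl ha0)), by simp; omega⟩
      have hm : mult (Φ A) ∈ Φ A \ {0} := Nat.sInf_mem hne'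
      have hma0 : mult (Φ A) ≤ a0 :=
        Nat.sInf_le ⟨(hSmem a0).mpr (Or.inr (Or.inl ha0)), by simp; omega⟩
      set m := mult (Φ A) with hmdef
      have hmA : m ∈ A := by
        have := (hSmem m).mp hm.1
        rcases this with h | h | h
        · exact absurd h hm.2
        · exact h
        · omega
      have hmb := hAb m hmA
      rw [depth, hfrob, ← hmdef]
      have hmpos : 0 < m := by omega
      have : 2 ≤ (f + m) / m := (Nat.le_div_iff_mul_le hmpos).mpr (by omega)
      have : (f + m) / m < 3 := (Nat.div_lt_iff_lt_mul hmpos).mpr (by omega)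
      omega
  rw [key]
  have hinj : Set.InjOn Φ {A : Finset ℕ | A ⊆ I ∧ A.Nonempty} := by
    have helper : ∀ A : Finset ℕ, A ⊆ I → ∀ n, n ∈ A ↔ (n ∈ Φ A ∧ n ∈ I) := by
      intro A hAI n
      constructor
      · intro hn
        exact ⟨(hmem A n).mpr (Or.inr (Or.inl hn)), hAI hn⟩
      · rintro ⟨hn, hnI⟩
        rw [hI, Finset.mem_Ioc] at hnI
        rcases (hmem A n).mp hn with rfl | h | h
        · omega
        · exact h
        · omega
    rintro A₁ ⟨hA₁, -⟩ A₂ ⟨hA₂, -⟩ h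
    ext n
    rw [helper A₁ hA₁ n, helper A₂ hA₂ n, h]
  rw [Set.ncard_image_of_injOn hinj]
  have hset : {A : Finset ℕ | A ⊆ I ∧ A.Nonempty} = ↑(I.powerset.erase ∅) := by
    ext A
    simp [Finset.mem_erase, Finset.nonempty_iff_ne_empty, and_comm]
  rw [hset, Set.ncard_coe_finset, Finset.card_erase_of_mem (by simp),
    Finset.card_powerset]
  have hcard : I.card = (f - 1) / 2 := by
    rw [hI, Nat.card_Ioc]
    omega
  rw [hcard]
end

section
/- The number of numerical semigroups S of depth 2 with Frobenius number f and with n(S) = n (where n(S) = |S ∩ [1, f]|) equals the binomial coefficient C(⌊(f-1)/2⌋, n), for 1 ≤ n ≤ ⌊(f-1)/2⌋. -/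
theorem stmt_6 (f n : ℕ) (hn1 : 1 ≤ n) (hn2 : n ≤ (f - 1) / 2) :
    Set.ncard {S : Set ℕ | IsNumericalSemigroup S ∧ frob S = f ∧ depth S = 2 ∧
      (S ∩ Set.Icc 1 f).ncard = n} = Nat.choose ((f - 1) / 2) n := by
  have hf : 3 ≤ f := by omega
  set I : Finset ℕ := Finset.Icc (f/2+1) (f-1) with hI
  have hIcard : I.card = (f-1)/2 := by
    rw [hI, Nat.card_Icc]; omega
  set φ : Finset ℕ → Set ℕ := fun A => {0} ∪ ↑A ∪ Set.Ici (f+1) with hφ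
  have hrec : ∀ A ∈ I.powersetCard n, φ A ∩ Set.Icc (f/2+1) (f-1) = ↑A := by
    intro A hA
    rw [Finset.mem_powersetCard] at hA
    ext x
    simp only [hφ, Set.mem_inter_iff, Set.mem_union, Set.mem_singleton_iff,
      Set.mem_Ici, Set.mem_Icc, Finset.mem_coe]
    constructor
    · rintro ⟨(rfl | hx) | hx, h1, h2⟩
      · omega
      · exact hx
      · omega
    · intro hx
      have := hA.1 hx
      rw [hI, Finset.mem_Icc] at this
      exact ⟨Or.inl (Or.inr hx), this⟩
  have key : {S : Set ℕ | IsNumericalSemigroup S ∧ frob S = f ∧ depth S = 2 ∧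
      (S ∩ Set.Icc 1 f).ncard = n} = φ '' ↑(I.powersetCard n) := by
    ext S
    simp only [Set.mem_setOf_eq, Set.mem_image, Finset.mem_coe]
    constructor
    · rintro ⟨⟨h0, hadd, hfin⟩, hfrob, hdep, hn⟩
      have hbdd : BddAbove Sᶜ := hfin.bddAbove
      have hne : Sᶜ.Nonempty := by
        by_contra h
        rw [Set.not_nonempty_iff_eq_empty] at h
        rw [frob, h] at hfrob
        simp at hfrob; omega
      have hfS : f ∉ S := by
        have := Nat.sSup_mem hne hbdd
        rwa [← frob, hfrob] at this
      have hub : ∀ x, x ∉ S → x ≤ f := by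
        intro x hx
        have := le_csSup hbdd (Set.mem_compl hx)
        rwa [← frob, hfrob] at this
      have hSne : (S \ {0}).Nonempty := by
        refine ⟨f+1, ?_, by simp⟩
        by_contra h
        exact absurd (hub _ h) (by omega)
      have hmmem : mult S ∈ S \ {0} := Nat.sInf_mem hSne
      have hdep' : (f + mult S) / mult S = 2 := by
        rw [depth, hfrob] at hdep; exact hdep
      have hmle : ∀ x ∈ S, x ≠ 0 → mult S ≤ x := fun x hx hx0 =>
        Nat.sInf_le ⟨hx, hx0⟩
      set m := mult S with hm
      have hmS : m ∈ S := hmmem.1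
      have hm0 : m ≠ 0 := fun h => hmmem.2 h
      have hmf : m ≠ f := fun h => hfS (h ▸ hmS)
      have hd1 : 2 * m ≤ f + m := by
        have := Nat.div_mul_le_self (f + m) m
        rw [hdep'] at this; exact this
      have hd2 : f + m < 3 * m := by
        have := (Nat.div_lt_iff_lt_mul (by omega : 0 < m)).1
          (by omega : (f + m) / m < 3)
        exact this
      have hmlow : f/2 + 1 ≤ m := by omega
      have hmhigh : m ≤ f - 1 := by omega
      have hfinA : (S ∩ Set.Icc (f/2+1) (f-1)).Finite :=
        (Set.finite_Icc _ _).inter_of_right S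
      have hseteq : S ∩ Set.Icc 1 f = S ∩ Set.Icc (f/2+1) (f-1) := by
        ext x
        simp only [Set.mem_inter_iff, Set.mem_Icc]
        constructor
        · rintro ⟨hxS, h1, h2⟩
          have hxm := hmle x hxS (by omega)
          have : x ≠ f := fun h => hfS (h ▸ hxS)
          exact ⟨hxS, by omega, by omega⟩
        · rintro ⟨hxS, h1, h2⟩
          exact ⟨hxS, by omega, by omega⟩
      refine ⟨hfinA.toFinset, ?_, ?_⟩
      · rw [Finset.mem_powersetCard]
        constructor
        · intro x hx
          rw [Set.Finite.mem_toFinset] at hx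
          rw [hI, Finset.mem_Icc]
          exact hx.2
        · rw [← Set.ncard_eq_toFinset_card _ hfinA, ← hseteq]
          exact hn
      · rw [hφ]
        ext x
        simp only [Set.mem_union, Set.mem_singleton_iff, Set.mem_Ici,
          Set.Finite.coe_toFinset, Set.mem_inter_iff, Set.mem_Icc]
        constructor
        · rintro ((rfl | ⟨hxS, _⟩) | hx)
          · exact h0
          · exact hxS
          · by_contra h
            exact absurd (hub _ h) (by omega)
        · intro hxS
          rcases Nat.eq_zero_or_pos x with rfl | hx0
          · exact Or.inl (Or.inl rfl)
          rcases le_or_gt x f with hxf | hxf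
          · have hxm := hmle x hxS (by omega)
            have : x ≠ f := fun h => hfS (h ▸ hxS)
            exact Or.inl (Or.inr ⟨hxS, by omega, by omega⟩)
          · exact Or.inr (by omega)
    · rintro ⟨A, hA, rfl⟩
      have hA' := hA
      rw [Finset.mem_powersetCard] at hA'
      obtain ⟨hsub, hcard⟩ := hA'
      have hlow : ∀ x ∈ φ A, x = 0 ∨ f/2 + 1 ≤ x := by
        intro x hx
        rcases hx with (rfl | hx) | hx
        · exact Or.inl rfl
        · have := hsub hx
          rw [hI, Finset.mem_Icc] at this
          exact Or.inr this.1
        · exact Or.inr (by simp only [Set.mem_Ici] at hx; omega)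
      have hhigh : ∀ x ∈ (A : Set ℕ), x ≤ f - 1 := by
        intro x hx
        have := hsub hx
        rw [hI, Finset.mem_Icc] at this
        exact this.2
      have h0 : (0 : ℕ) ∈ φ A := Or.inl (Or.inl rfl)
      have hIci : Set.Ici (f+1) ⊆ φ A := fun x hx => Or.inr hx
      have hfnot : f ∉ φ A := by
        rintro ((h | h) | h)
        · simp at h; omega
        · have := hhigh f h; omega
        · simp only [Set.mem_Ici] at h; omega
      have hubc : ∀ x ∈ (φ A)ᶜ, x ≤ f := by
        intro x hx
        by_contra h
        exact hx (hIci (by simp only [Set.mem_Ici]; omega))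
      have hcfin : (φ A)ᶜ.Finite :=
        (Set.finite_Iic f).subset (fun x hx => hubc x hx)
      have hfrob : frob (φ A) = f := by
        rw [frob]
        apply le_antisymm
        · exact csSup_le ⟨f, hfnot⟩ hubc
        · exact le_csSup hcfin.bddAbove hfnot
      refine ⟨⟨h0, ?_, hcfin⟩, hfrob, ?_, ?_⟩
      · intro a ha b hb
        rcases hlow a ha with rfl | ha'
        · simpa using hb
        rcases hlow b hb with rfl | hb'
        · simpa using ha
        exact hIci (by simp only [Set.mem_Ici]; omega)
      · -- depth
        have hAne : A.Nonempty := Finset.card_pos.mp (by omega)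
        obtain ⟨a, haA⟩ := hAne
        have haI := hsub haA
        rw [hI, Finset.mem_Icc] at haI
        have haS : a ∈ φ A \ {0} := ⟨Or.inl (Or.inr haA), by simp; omega⟩
        have hSne : (φ A \ {0}).Nonempty := ⟨a, haS⟩
        have hmmem : mult (φ A) ∈ φ A \ {0} := Nat.sInf_mem hSne
        have hmlea : mult (φ A) ≤ a := Nat.sInf_le haS
        set m := mult (φ A) with hm
        have hm0 : m ≠ 0 := fun h => hmmem.2 h
        have hmhigh : m ≤ f - 1 := le_trans hmlea haI.2
        have hmlow : f/2 + 1 ≤ m := by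
          rcases hlow m hmmem.1 with h | h
          · omega
          · exact h
        rw [depth, hfrob, ← hm]
        exact Nat.div_eq_of_lt_le (by omega) (by omega)
      · have heq : φ A ∩ Set.Icc 1 f = ↑A := by
          ext x
          simp only [hφ, Set.mem_inter_iff, Set.mem_union, Set.mem_singleton_iff,
            Set.mem_Ici, Set.mem_Icc, Finset.mem_coe]
          constructor
          · rintro ⟨(rfl | hx) | hx, h1, h2⟩
            · omega
            · exact hx
            · omega
          · intro hx
            have := hsub hx
            rw [hI, Finset.mem_Icc] at this
            exact ⟨Or.inl (Or.inr hx), by omega, by omega⟩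
        rw [heq, Set.ncard_coe_finset, hcard]
  rw [key]
  rw [Set.ncard_image_of_injOn, Set.ncard_coe_finset, Finset.card_powersetCard, hIcard]
  intro A hA B hB hAB
  rw [Finset.mem_coe] at hA hB
  have := hrec A hA
  rw [hAB, hrec B hB] at this
  exact (Finset.coe_injective this.symm)
end

section
/- Let Y be a finite nonempty set of natural numbers, f an odd integer with f > 6·max(Y) + 6, f̄ = (f-1)/2, Z ⊆ [0, max(Y)] with Z ∩ Y = ∅, and W₁ = (Y - Z - 1) ∩ [0, ∞). For any subset T of [f - f̄ + max(Y) + 1, f - 1] \ ((f-1) - (2Y ∪ W₁)), the set S = {0} ∪ (f̄ - Y) ∪ (Z + f - f̄) ∪ T ∪ ((f-1) - (2Y ∪ W₁)) ∪ {f+1, f+2, ...} is closed under addition, i.e., is a numerical semigroup. -/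
theorem stmt_10 (Y Z : Finset ℕ) (hY : Y.Nonempty) (f : ℕ) (hodd : Odd f)
    (hf : 6 * Y.max' hY + 6 < f)
    (hZ : ∀ z ∈ Z, z ≤ Y.max' hY) (hZY : Disjoint Z Y) (T : Set ℕ)
    (hT : T ⊆ Set.Icc (f - (f - 1) / 2 + Y.max' hY + 1) (f - 1) \
      {b | ∃ a ∈ ({a | ∃ y₁ ∈ Y, ∃ y₂ ∈ Y, a = y₁ + y₂} ∪
        {w | ∃ y ∈ Y, ∃ z ∈ Z, z + 1 ≤ y ∧ w = y - z - 1} : Set ℕ), b = f - 1 - a}) :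
    IsNumericalSemigroup (({0} : Set ℕ) ∪ {s | ∃ y ∈ Y, s = (f - 1) / 2 - y} ∪
      {s | ∃ z ∈ Z, s = z + (f - (f - 1) / 2)} ∪ T ∪
      {b | ∃ a ∈ ({a | ∃ y₁ ∈ Y, ∃ y₂ ∈ Y, a = y₁ + y₂} ∪
        {w | ∃ y ∈ Y, ∃ z ∈ Z, z + 1 ≤ y ∧ w = y - z - 1} : Set ℕ), b = f - 1 - a} ∪
      {n : ℕ | f + 1 ≤ n}) := by
  obtain ⟨k, hk⟩ := hodd
  set M := Y.max' hY with hM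
  have hkM : 3 * M + 3 ≤ k := by omega
  have hfb : (f - 1) / 2 = k := by omega
  have hMY : ∀ y ∈ Y, y ≤ M := fun y hy => Y.le_max' y hy
  set S : Set ℕ := (({0} : Set ℕ) ∪ {s | ∃ y ∈ Y, s = (f - 1) / 2 - y} ∪
      {s | ∃ z ∈ Z, s = z + (f - (f - 1) / 2)} ∪ T ∪
      {b | ∃ a ∈ ({a | ∃ y₁ ∈ Y, ∃ y₂ ∈ Y, a = y₁ + y₂} ∪
        {w | ∃ y ∈ Y, ∃ z ∈ Z, z + 1 ≤ y ∧ w = y - z - 1} : Set ℕ), b = f - 1 - a} ∪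
      {n : ℕ | f + 1 ≤ n}) with hS
  have memA5 : ∀ n : ℕ, f + 1 ≤ n → n ∈ S := fun n h => Or.inr h
  have classify : ∀ s ∈ S, s = 0 ∨ (∃ y ∈ Y, s = k - y) ∨ (∃ z ∈ Z, s = z + (k + 1)) ∨
      k + M + 2 ≤ s := by
    intro s hs
    rcases hs with (((((h | h) | h) | h) | h) | h)
    · exact Or.inl h
    · obtain ⟨y, hy, rfl⟩ := h
      exact Or.inr (Or.inl ⟨y, hy, by rw [hfb]⟩)
    · obtain ⟨z, hz, rfl⟩ := h
      refine Or.inr (Or.inr (Or.inl ⟨z, hz, ?_⟩))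
      omega
    · have h1 := (hT h).1
      rw [Set.mem_Icc] at h1
      exact Or.inr (Or.inr (Or.inr (by omega)))
    · obtain ⟨a', ha', rfl⟩ := h
      refine Or.inr (Or.inr (Or.inr ?_))
      rcases ha' with ⟨y₁, hy₁, y₂, hy₂, rfl⟩ | ⟨y, hy, z, hz, hzy, rfl⟩
      · have := hMY y₁ hy₁; have := hMY y₂ hy₂; omega
      · have := hMY y hy; omega
    · have h' : f + 1 ≤ s := h
      exact Or.inr (Or.inr (Or.inr (by omega)))
  refine ⟨Or.inl (Or.inl (Or.inl (Or.inl (Or.inl rfl)))), ?_, ?_⟩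
  · intro a ha b hb
    rcases classify a ha with rfl | ⟨y₁, hy₁, ha'⟩ | ⟨z₁, hz₁, ha'⟩ | ha'
    · simpa using hb
    · -- a = k - y₁
      have hy₁M := hMY y₁ hy₁
      rcases classify b hb with rfl | ⟨y₂, hy₂, hb'⟩ | ⟨z₂, hz₂, hb'⟩ | hb'
      · simpa using ha
      · -- both in f̄ - Y
        have hy₂M := hMY y₂ hy₂
        refine Or.inl (Or.inr ⟨y₁ + y₂, Or.inl ⟨y₁, hy₁, y₂, hy₂, rfl⟩, ?_⟩)
        omega
      · -- a = k - y₁, b = z₂ + (k+1)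
        have hz₂M := hZ z₂ hz₂
        have hne : z₂ ≠ y₁ := fun h => (Finset.disjoint_left.mp hZY hz₂) (h ▸ hy₁)
        rcases lt_or_gt_of_ne hne with hlt | hgt
        · refine Or.inl (Or.inr ⟨y₁ - z₂ - 1, Or.inr ⟨y₁, hy₁, z₂, hz₂, by omega, rfl⟩, ?_⟩)
          omega
        · exact memA5 _ (by omega)
      · exact memA5 _ (by omega)
    · -- a = z₁ + (k+1)
      have hz₁M := hZ z₁ hz₁
      rcases classify b hb with rfl | ⟨y₂, hy₂, hb'⟩ | ⟨z₂, hz₂, hb'⟩ | hb'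
      · simpa using ha
      · have hy₂M := hMY y₂ hy₂
        have hne : z₁ ≠ y₂ := fun h => (Finset.disjoint_left.mp hZY hz₁) (h ▸ hy₂)
        rcases lt_or_gt_of_ne hne with hlt | hgt
        · refine Or.inl (Or.inr ⟨y₂ - z₁ - 1, Or.inr ⟨y₂, hy₂, z₁, hz₁, by omega, rfl⟩, ?_⟩)
          omega
        · exact memA5 _ (by omega)
      · exact memA5 _ (by omega)
      · exact memA5 _ (by omega)
    · rcases classify b hb with rfl | ⟨y₂, hy₂, hb'⟩ | ⟨z₂, hz₂, hb'⟩ | hb'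
      · simpa using ha
      · have hy₂M := hMY y₂ hy₂
        exact memA5 _ (by omega)
      · exact memA5 _ (by omega)
      · exact memA5 _ (by omega)
  · apply Set.Finite.subset (Set.finite_Iic f)
    intro n hn
    simp only [Set.mem_Iic]
    by_contra h
    exact hn (memA5 n (by omega))
end

section
/- Let S be a numerical semigroup of depth 3 with odd Frobenius number f, f̄ = (f-1)/2, Y = Y(S), Z = Z(S), and W₁ = (Y - Z - 1) ∩ [0, ∞). Then (f-1) - (2Y ∪ W₁) ⊆ S. -/
/-- `Y(S) = {t : 0 ≤ t < f̄, f̄ - t ∈ S}` where `f̄ = ⌊(f-1)/2⌋`. -/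
def Yset (S : Set ℕ) (f : ℕ) : Set ℕ :=
  {t | t < (f - 1) / 2 ∧ (f - 1) / 2 - t ∈ S}

/-- `Z(S) = {x - f + f̄ : x ∈ S, f/2 < x ≤ f - m(S)}` where `f̄ = ⌊(f-1)/2⌋`.
Since `x > f/2 ≥ f - f̄`, the subtraction `x - (f - f̄)` is an honest one. -/
noncomputable def Zset (S : Set ℕ) (f : ℕ) : Set ℕ :=
  {z | ∃ x ∈ S, f < 2 * x ∧ x ≤ f - mult S ∧ z = x - (f - (f - 1) / 2)}

theorem stmt_11 (S : Set ℕ) (hS : IsNumericalSemigroup S) (f : ℕ) (hf : frob S = f)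
    (hodd : Odd f) (hd : depth S = 3) :
    {b | ∃ a ∈ ({a | ∃ y₁ ∈ Yset S f, ∃ y₂ ∈ Yset S f, a = y₁ + y₂} ∪
      {w | ∃ y ∈ Yset S f, ∃ z ∈ Zset S f, z + 1 ≤ y ∧ w = y - z - 1} : Set ℕ),
      b = f - 1 - a} ⊆ S := by
  obtain ⟨k, hk⟩ := hodd
  obtain ⟨h0, hadd, hfin⟩ := hS
  rintro b ⟨a, (⟨y₁, ⟨hy₁, hy₁S⟩, y₂, ⟨hy₂, hy₂S⟩, rfl⟩ |
    ⟨y, ⟨hy, hyS⟩, z, ⟨x, hxS, hx1, hx2, rfl⟩, hzy, rfl⟩), rfl⟩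
  · have he : f - 1 - (y₁ + y₂) = ((f - 1) / 2 - y₁) + ((f - 1) / 2 - y₂) := by omega
    rw [he]; exact hadd _ hy₁S _ hy₂S
  · have he : f - 1 - (y - (x - (f - (f - 1) / 2)) - 1) = ((f - 1) / 2 - y) + x := by omega
    rw [he]; exact hadd _ hyS _ hxS
end

section
/- A numerical semigroup S with multiplicity m is of maximal embedding dimension if and only if the set (S \ {0}) - m = {s - m : s ∈ S, s ≠ 0} is a numerical semigroup. -/
/-- The embedding dimension: the number of minimal generators, i.e. nonzero elements
that are not the sum of two nonzero elements of `S`. -/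
noncomputable def embDim (S : Set ℕ) : ℕ :=
  ((S \ {0}) \ {a | ∃ x ∈ S \ ({0} : Set ℕ), ∃ y ∈ S \ ({0} : Set ℕ), a = x + y}).ncard

namespace IsNumericalSemigroup

variable {S : Set ℕ}

theorem zero_mem (hS : IsNumericalSemigroup S) : 0 ∈ S := hS.1

theorem finite_compl (hS : IsNumericalSemigroup S) : Sᶜ.Finite := hS.2.2

theorem add_mem (hS : IsNumericalSemigroup S) {a b : ℕ} (ha : a ∈ S) (hb : b ∈ S) : a + b ∈ S :=
  hS.2.1 a ha b hb

theorem add_mul_mem (hS : IsNumericalSemigroup S) {s n : ℕ} (hs : s ∈ S) (hn : n ∈ S) (k : ℕ) :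
    s + n * k ∈ S := by
  induction k with
  | zero => simpa using hs
  | succ k ih => simpa [Nat.mul_succ, ← Nat.add_assoc] using hS.add_mem ih hn

theorem exists_forall_lt_mem (hS : IsNumericalSemigroup S) : ∃ N, ∀ x, N < x → x ∈ S := by
  obtain ⟨N, hN⟩ := hS.finite_compl.bddAbove
  exact ⟨N, fun x hx => by_contra fun hxS => (hN hxS).not_gt hx⟩

theorem mult_mem_diff_zero (hS : IsNumericalSemigroup S) : mult S ∈ S \ {0} := by
  have hinf : S.Infinite := fun hfin =>
    Set.infinite_univ (by simpa using hfin.union hS.finite_compl)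
  exact Nat.sInf_mem (hinf.sdiff (Set.finite_singleton 0)).nonempty

theorem mult_mem (hS : IsNumericalSemigroup S) : mult S ∈ S := hS.mult_mem_diff_zero.1

theorem mult_pos (hS : IsNumericalSemigroup S) : 0 < mult S :=
  Nat.pos_of_ne_zero hS.mult_mem_diff_zero.2

end IsNumericalSemigroup

theorem mult_le {S : Set ℕ} {s : ℕ} (hs : s ∈ S) (hs0 : s ≠ 0) : mult S ≤ s :=
  Nat.sInf_le ⟨hs, hs0⟩

def aperySet (S : Set ℕ) (n : ℕ) : Set ℕ := {w | w ∈ S ∧ ∀ s ∈ S, s + n ≠ w}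

theorem bijOn_mod_aperySet {S : Set ℕ} (hS : IsNumericalSemigroup S) {n : ℕ} (hn : n ∈ S)
    (hn0 : 0 < n) : Set.BijOn (· % n) (aperySet S n) (Set.Iio n) := by
  have inj_of_le : ∀ a ∈ aperySet S n, ∀ b ∈ aperySet S n, a ≤ b → a % n = b % n → a = b := by
    intro a ha b hb hab hmod
    obtain ⟨k, hk⟩ := (Nat.modEq_iff_dvd' hab).mp hmod
    cases k with
    | zero => omega
    | succ j =>
      exact absurd (by rw [Nat.mul_succ] at hk; omega) (hb.2 _ (hS.add_mul_mem ha.1 hn j))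
  refine ⟨fun w _ => Nat.mod_lt w hn0, fun a ha b hb hab => ?_, fun r hr => ?_⟩
  · rcases le_total a b with h | h
    exacts [inj_of_le a ha b hb h hab, (inj_of_le b hb a ha h hab.symm).symm]
  · obtain ⟨N, hN⟩ := hS.exists_forall_lt_mem
    set P := {x | x ∈ S ∧ x % n = r}
    have hP : r + n * (N + 1) ∈ P :=
      ⟨hN _ (by nlinarith), by rw [Nat.add_mul_mod_self_left, Nat.mod_eq_of_lt hr]⟩
    -- the least element of `S` in the residue class of `r` is an Apéry element
    have hw : sInf P ∈ P := Nat.sInf_mem ⟨_, hP⟩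
    refine ⟨sInf P, ⟨hw.1, fun s hs hsw => ?_⟩, hw.2⟩
    have hsP : s ∈ P := ⟨hs, by rw [← hw.2, ← hsw, Nat.add_mod_right]⟩
    have := Nat.sInf_le hsP
    omega

theorem ncard_aperySet {S : Set ℕ} (hS : IsNumericalSemigroup S) {n : ℕ} (hn : n ∈ S)
    (hn0 : 0 < n) : (aperySet S n).ncard = n := by
  have hbij := bijOn_mod_aperySet hS hn hn0
  rw [← hbij.injOn.ncard_image, hbij.image_eq, ← Finset.coe_range,
    Set.ncard_coe_finset, Finset.card_range]

def minimalGenerators (S : Set ℕ) : Set ℕ :=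
  (S \ {0}) \ {a | ∃ x ∈ S \ ({0} : Set ℕ), ∃ y ∈ S \ ({0} : Set ℕ), a = x + y}

theorem embDim_eq_ncard_minimalGenerators (S : Set ℕ) :
    embDim S = (minimalGenerators S).ncard := rfl

theorem mem_minimalGenerators {S : Set ℕ} {a : ℕ} :
    a ∈ minimalGenerators S ↔
      a ∈ S ∧ a ≠ 0 ∧ ∀ x ∈ S, x ≠ 0 → ∀ y ∈ S, y ≠ 0 → a ≠ x + y := by
  simp [minimalGenerators, and_assoc]

section Multiplicity

variable {S : Set ℕ} (hS : IsNumericalSemigroup S)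
include hS

theorem mult_mem_minimalGenerators : mult S ∈ minimalGenerators S := by
  refine mem_minimalGenerators.2 ⟨hS.mult_mem, hS.mult_pos.ne', fun x hx hx0 y hy hy0 h => ?_⟩
  have := mult_le hx hx0
  have := mult_le hy hy0
  omega

theorem minimalGenerators_subset_insert_aperySet :
    minimalGenerators S ⊆ insert (mult S) (aperySet S (mult S) \ {0}) := by
  intro g hg
  obtain ⟨hgS, hg0, hgmin⟩ := mem_minimalGenerators.1 hg
  by_cases hgm : g = mult S
  · exact Or.inl hgm
  · refine Or.inr ⟨⟨hgS, fun s hs hsg => hgmin s hs (by omega) _ hS.mult_mem ?_ hsg.symm⟩, hg0⟩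
    exact hS.mult_pos.ne'

theorem ncard_insert_mult_aperySet :
    (insert (mult S) (aperySet S (mult S) \ {0})).ncard = mult S := by
  have hcard := ncard_aperySet hS hS.mult_mem hS.mult_pos
  have hfin : (aperySet S (mult S)).Finite := Set.finite_of_ncard_pos (hcard.symm ▸ hS.mult_pos)
  have h0 : 0 ∈ aperySet S (mult S) := ⟨hS.zero_mem, fun s _ h => hS.mult_pos.ne' (by omega)⟩
  have hm : mult S ∉ aperySet S (mult S) \ {0} := fun h => h.1.2 0 hS.zero_mem (zero_add _)
  rw [Set.ncard_insert_of_notMem hm hfin.sdiff, Set.ncard_sdiff_singleton_of_mem h0, hcard,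
    Nat.sub_add_cancel hS.mult_pos]

theorem embDim_eq_mult_iff_aperySet_subset :
    embDim S = mult S ↔ aperySet S (mult S) \ {0} ⊆ minimalGenerators S := by
  have hsub := minimalGenerators_subset_insert_aperySet hS
  have hcard := ncard_insert_mult_aperySet hS
  have hfin : (insert (mult S) (aperySet S (mult S) \ {0})).Finite :=
    Set.finite_of_ncard_pos (hcard.symm ▸ hS.mult_pos)
  rw [embDim_eq_ncard_minimalGenerators, ← Set.insert_subset_iff.trans
    (and_iff_right (mult_mem_minimalGenerators hS))]
  constructor
  · intro h
    exact (Set.eq_of_subset_of_ncard_le hsub (by omega) hfin).symm.subset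
  · intro h
    rw [hsub.antisymm h, hcard]

theorem aperySet_subset_minimalGenerators_iff :
    aperySet S (mult S) \ {0} ⊆ minimalGenerators S ↔
      ∀ x ∈ S, x ≠ 0 → ∀ y ∈ S, y ≠ 0 → x + y - mult S ∈ S := by
  constructor
  · intro h x hx hx0 y hy hy0
    by_contra hxy
    -- otherwise `x + y` would be a nonzero Apéry element, hence a minimal generator
    have hA : x + y ∈ aperySet S (mult S) \ {0} :=
      ⟨⟨hS.add_mem hx hy, fun s hs hsm => hxy (by rwa [← hsm, Nat.add_sub_cancel])⟩,
        by rw [Set.mem_singleton_iff]; omega⟩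
    exact (mem_minimalGenerators.1 (h hA)).2.2 x hx hx0 y hy hy0 rfl
  · rintro h w ⟨hw, hw0⟩
    refine mem_minimalGenerators.2 ⟨hw.1, hw0, fun x hx hx0 y hy hy0 hxy => ?_⟩
    have := mult_le hx hx0
    exact hw.2 _ (h x hx hx0 y hy hy0) (by omega)

theorem image_sub_mult_eq_preimage :
    (fun s => s - mult S) '' (S \ {0}) = (· + mult S) ⁻¹' S := by
  ext n
  constructor
  · rintro ⟨s, ⟨hs, hs0⟩, rfl⟩
    simpa [Nat.sub_add_cancel (mult_le hs hs0)] using hs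
  · intro hn
    exact ⟨n + mult S, ⟨hn, by simpa using (hS.mult_pos.trans_le (Nat.le_add_left _ n)).ne'⟩,
      by simp⟩

theorem isNumericalSemigroup_preimage_add_mult_iff :
    IsNumericalSemigroup ((· + mult S) ⁻¹' S) ↔
      ∀ x ∈ S, x ≠ 0 → ∀ y ∈ S, y ≠ 0 → x + y - mult S ∈ S := by
  have hfin : ((· + mult S) ⁻¹' S)ᶜ.Finite :=
    hS.finite_compl.preimage (fun a _ b _ h => Nat.add_right_cancel h)
  constructor
  · intro hT x hx hx0 y hy hy0
    have hmx := mult_le hx hx0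
    have hmy := mult_le hy hy0
    have := hT.add_mem (a := x - mult S) (b := y - mult S)
      (by simpa [Nat.sub_add_cancel hmx] using hx) (by simpa [Nat.sub_add_cancel hmy] using hy)
    simpa only [Set.mem_preimage, show x - mult S + (y - mult S) + mult S = x + y - mult S by omega]
      using this
  · intro h
    have := hS.mult_pos
    refine ⟨by simpa using hS.mult_mem, fun a ha b hb => ?_, hfin⟩
    have := h (a + mult S) ha (by omega) (b + mult S) hb (by omega)
    simpa only [Set.mem_preimage, show a + mult S + (b + mult S) - mult S = a + b + mult S by omega]
      using this

end Multiplicity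

theorem stmt_12 (S : Set ℕ) (hS : IsNumericalSemigroup S) :
    embDim S = mult S ↔
      IsNumericalSemigroup ((fun s => s - mult S) '' (S \ {0})) := by
  rw [embDim_eq_mult_iff_aperySet_subset hS, aperySet_subset_minimalGenerators_iff hS,
    image_sub_mult_eq_preimage hS, isNumericalSemigroup_preimage_add_mult_iff hS]
end

section
/- There exists a constant c > 0 such that for every f ≥ 1, the number of maximal embedding dimension numerical semigroups with Frobenius number f is at least c · 2^(f/3). In particular, MED(f) ≥ 2^(-8/3) · 2^(f/3). -/
/-- `MED f`: the number of maximal-embedding-dimension numerical semigroups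
with Frobenius number `f`. -/
noncomputable def MED (f : ℕ) : ℕ :=
  Set.ncard {S : Set ℕ | IsNumericalSemigroup S ∧ frob S = f ∧ embDim S = mult S}

namespace NumericalSemigroup

lemma compl_subset_Iic_frob {S : Set ℕ} (hS : Sᶜ.Finite) : Sᶜ ⊆ Set.Iic (frob S) :=
  fun _ hn => le_csSup hS.bddAbove hn

lemma finite_setOf_frob_eq (f : ℕ) :
    {S : Set ℕ | IsNumericalSemigroup S ∧ frob S = f}.Finite := by
  have hsub : {S : Set ℕ | IsNumericalSemigroup S ∧ frob S = f} ⊆ compl ⁻¹' {U | U ⊆ Set.Iic f} :=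
    fun S ⟨hS, hf⟩ => hf ▸ compl_subset_Iic_frob hS.2.2
  exact ((Set.finite_Iic f).finite_subsets.preimage compl_injective.injOn).subset hsub

lemma add_mul_mem {T : Set ℕ} (hT : IsNumericalSemigroup T) {m t : ℕ} (hm : m ∈ T)
    (ht : t ∈ T) (k : ℕ) : t + m * k ∈ T := by
  induction k with
  | zero => simpa using ht
  | succ k ih => simpa [Nat.mul_succ, ← add_assoc] using hT.2.1 _ ih _ hm

def apery (T : Set ℕ) (m : ℕ) : Set ℕ := T \ ((m + ·) '' T)

/-- Reduction mod `m` is a bijection from the Apéry set onto the residues: each element is the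
least element of `T` in its residue class. -/
lemma ncard_apery {T : Set ℕ} (hT : IsNumericalSemigroup T) {m : ℕ} (hm : m ∈ T) (hm0 : 0 < m) :
    (apery T m).ncard = m := by
  suffices h : Set.BijOn (· % m) (apery T m) (Finset.range m) by
    rw [h.ncard_eq, Set.ncard_coe_finset, Finset.card_range]
  refine ⟨fun t _ => by simpa using Nat.mod_lt t hm0, ?_, ?_⟩
  · suffices h : ∀ t ∈ apery T m, ∀ t' ∈ apery T m, t % m = t' % m → t ≤ t' → t = t' by
      intro t ht t' ht' heq
      rcases le_total t t' with hle | hle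
      exacts [h t ht t' ht' heq hle, (h t' ht' t ht heq.symm hle).symm]
    rintro t ⟨ht, -⟩ t' ⟨-, ht'⟩ heq hle
    obtain ⟨k, hk⟩ := Nat.dvd_of_mod_eq_zero (Nat.sub_mod_eq_zero_of_mod_eq heq.symm)
    by_contra hne
    obtain ⟨k, rfl⟩ := Nat.exists_eq_succ_of_ne_zero (by rintro rfl; omega : k ≠ 0)
    refine ht' ⟨t + m * k, add_mul_mem hT hm ht k, ?_⟩
    rw [Nat.mul_succ] at hk
    change m + (t + m * k) = t'
    omega
  · intro r hr
    obtain ⟨b, hb⟩ := hT.2.2.bddAbove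
    set C := {n | n ∈ T ∧ n % m = r}
    have hC : (r + m * (b + 1)) ∈ C := by
      refine ⟨by_contra fun h => ?_, by simp [Nat.mod_eq_of_lt (by simpa using hr)]⟩
      have := hb h
      nlinarith
    obtain ⟨hmin, hminr⟩ := Nat.sInf_mem ⟨_, hC⟩
    refine ⟨sInf C, ⟨hmin, ?_⟩, hminr⟩
    rintro ⟨t, ht, heq⟩
    change m + t = sInf C at heq
    exact Nat.notMem_of_lt_sInf (by omega : t < sInf C) ⟨ht, by rw [← hminr, ← heq]; simp⟩

/-- `shift m T = {0} ∪ (m + T)`: the MED semigroups of multiplicity `m` are exactly these,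
with `T` a numerical semigroup containing `m`. -/
def shift (m : ℕ) (T : Set ℕ) : Set ℕ := insert 0 ((m + ·) '' T)

lemma add_mem_shift_iff {m : ℕ} (hm : 0 < m) {T : Set ℕ} {t : ℕ} :
    m + t ∈ shift m T ↔ t ∈ T := by
  simp only [shift, Set.mem_insert_iff, Nat.add_eq_zero_iff, Set.mem_image,
    Nat.add_left_cancel_iff, exists_eq_right, or_iff_right_iff_imp, and_imp]
  omega

lemma isNumericalSemigroup_shift {T : Set ℕ} (hT : IsNumericalSemigroup T) {m : ℕ} (hm : m ∈ T) :
    IsNumericalSemigroup (shift m T) := by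
  refine ⟨Set.mem_insert 0 _, ?_, ?_⟩
  · rintro _ (rfl | ⟨a, ha, rfl⟩) _ (rfl | ⟨b, hb, rfl⟩)
    · exact Set.mem_insert 0 _
    · exact Or.inr ⟨b, hb, (zero_add _).symm⟩
    · exact Or.inr ⟨a, ha, (add_zero _).symm⟩
    · exact Or.inr ⟨m + a + b, hT.2.1 _ (hT.2.1 _ hm _ ha) _ hb, by simp only; ring⟩
  · have hsub : (shift m T)ᶜ ⊆ Set.Iio m ∪ (m + ·) '' Tᶜ := by
      intro n hn
      by_cases hnm : n < m
      · exact Or.inl hnm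
      · refine Or.inr ⟨n - m, fun h => hn (Or.inr ⟨n - m, h, ?_⟩), ?_⟩ <;> simp only <;> omega
    exact ((Set.finite_Iio m).union (hT.2.2.image _)).subset hsub

lemma shift_diff_zero {m : ℕ} (hm : 0 < m) (T : Set ℕ) : shift m T \ {0} = (m + ·) '' T := by
  ext n
  simp only [shift, Set.mem_sdiff, Set.mem_insert_iff, Set.mem_image, Set.mem_singleton_iff]
  constructor
  · rintro ⟨h | h, h0⟩
    exacts [absurd h h0, h]
  · rintro ⟨t, ht, rfl⟩
    exact ⟨Or.inr ⟨t, ht, rfl⟩, by omega⟩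

lemma mult_shift {T : Set ℕ} (hT0 : 0 ∈ T) {m : ℕ} (hm : 0 < m) : mult (shift m T) = m := by
  refine IsLeast.csInf_eq ⟨?_, ?_⟩ <;> rw [shift_diff_zero hm]
  · exact ⟨0, hT0, add_zero m⟩
  · rintro _ ⟨t, -, rfl⟩
    exact Nat.le_add_right m t

lemma embDim_shift {T : Set ℕ} (hT : IsNumericalSemigroup T) {m : ℕ} (hm : m ∈ T) (hm0 : 0 < m) :
    embDim (shift m T) = m := by
  have hinj : Function.Injective (m + ·) := add_right_injective m
  have hsums : {a | ∃ x ∈ shift m T \ ({0} : Set ℕ), ∃ y ∈ shift m T \ ({0} : Set ℕ), a = x + y}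
      = (m + ·) '' ((m + ·) '' T) := by
    rw [shift_diff_zero hm0]
    ext a
    constructor
    · rintro ⟨_, ⟨x, hx, rfl⟩, _, ⟨y, hy, rfl⟩, rfl⟩
      exact ⟨m + (x + y), ⟨x + y, hT.2.1 _ hx _ hy, rfl⟩, by simp only; ring⟩
    · rintro ⟨_, ⟨t, ht, rfl⟩, rfl⟩
      exact ⟨m + t, ⟨t, ht, rfl⟩, m + 0, ⟨0, hT.1, rfl⟩, by simp only; ring⟩
  rw [embDim, hsums, shift_diff_zero hm0, ← Set.image_sdiff hinj,
    Set.ncard_image_of_injective _ hinj]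
  exact ncard_apery hT hm hm0

lemma isGreatest_compl_shift {T : Set ℕ} (hT0 : 0 ∈ T) {g : ℕ} (hg : IsGreatest Tᶜ g) (m : ℕ) :
    IsGreatest (shift m T)ᶜ (m + g) := by
  have hg0 : g ≠ 0 := by rintro rfl; exact hg.1 hT0
  refine ⟨?_, fun n hn => ?_⟩
  · rintro (h | ⟨t, ht, heq⟩)
    · omega
    · exact hg.1 (add_left_cancel heq ▸ ht)
  · by_contra hlt
    exact hn (Or.inr ⟨n - m, by_contra fun h => by have := hg.2 h; omega, by simp only; omega⟩)

lemma isGreatest_compl_shift_univ {f : ℕ} (hf : 0 < f) :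
    IsGreatest (shift (f + 1) Set.univ)ᶜ f := by
  refine ⟨?_, fun n hn => ?_⟩
  · rintro (h | ⟨t, -, heq⟩)
    · omega
    · simp only at heq; omega
  · by_contra hlt
    exact hn (Or.inr ⟨n - (f + 1), trivial, by simp only; omega⟩)

lemma shift_mem_setOf_MED {T : Set ℕ} (hT : IsNumericalSemigroup T) {m : ℕ} (hm : m ∈ T)
    (hm0 : 0 < m) {f : ℕ} (hf : IsGreatest (shift m T)ᶜ f) :
    shift m T ∈ {S : Set ℕ | IsNumericalSemigroup S ∧ frob S = f ∧ embDim S = mult S} :=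
  ⟨isNumericalSemigroup_shift hT hm, hf.csSup_eq, by rw [embDim_shift hT hm hm0, mult_shift hT.1 hm0]⟩

lemma MED_pos {f : ℕ} (hf : 0 < f) : 0 < MED f := by
  have hN : IsNumericalSemigroup (Set.univ : Set ℕ) := ⟨trivial, fun _ _ _ _ => trivial, by simp⟩
  refine (Set.ncard_pos ((finite_setOf_frob_eq f).subset fun S hS => ⟨hS.1, hS.2.1⟩)).2
    ⟨_, shift_mem_setOf_MED hN trivial f.succ_pos (isGreatest_compl_shift_univ hf)⟩

/-- As `B` runs over the subsets of `(g/2, g)`, `{0} ∪ B ∪ (g, ∞)` runs over the numerical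
semigroups of depth two with Frobenius number `g`. -/
def depthTwo (g : ℕ) (B : Set ℕ) : Set ℕ := insert 0 (B ∪ Set.Ioi g)

lemma isNumericalSemigroup_depthTwo {g : ℕ} {B : Set ℕ} (hB : ∀ a ∈ B, g < 2 * a) :
    IsNumericalSemigroup (depthTwo g B) := by
  have hpos : ∀ a ∈ depthTwo g B, a ≠ 0 → g < 2 * a := by
    rintro a (rfl | ha | ha) ha0
    exacts [absurd rfl ha0, hB a ha, by simp only [Set.mem_Ioi] at ha; omega]
  refine ⟨Set.mem_insert 0 _, fun a ha b hb => ?_, ?_⟩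
  · rcases eq_or_ne a 0 with rfl | ha0
    · simpa using hb
    rcases eq_or_ne b 0 with rfl | hb0
    · simpa using ha
    have := hpos a ha ha0
    have := hpos b hb hb0
    exact Or.inr (Or.inr (by simp only [Set.mem_Ioi]; omega))
  · refine (Set.finite_Iic g).subset fun n hn => ?_
    by_contra h
    exact hn (Or.inr (Or.inr (by simpa using h)))

lemma isGreatest_compl_depthTwo {g : ℕ} (hg : 0 < g) {B : Set ℕ} (hgB : g ∉ B) :
    IsGreatest (depthTwo g B)ᶜ g := by
  refine ⟨?_, fun n hn => ?_⟩
  · rintro (h | h | h)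
    exacts [by omega, hgB h, lt_irrefl g h]
  · by_contra h
    exact hn (Or.inr (Or.inr (by simpa using h)))

lemma depthTwo_inter_Ioo {g : ℕ} {B : Set ℕ} (hB : B ⊆ Set.Ioo 0 g) :
    depthTwo g B ∩ Set.Ioo 0 g = B := by
  ext a
  constructor
  · rintro ⟨h | h | h, h0, hg⟩
    · omega
    · exact h
    · exact absurd h (by simpa using hg.le)
  · exact fun ha => ⟨Or.inr (Or.inl ha), hB ha⟩

lemma two_pow_le_MED {m g : ℕ} (hgm : g < 2 * m) (hmg : m < g) :
    2 ^ (g - g / 2 - 2) ≤ MED (m + g) := by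
  set J := (Finset.Ioo (g / 2) g).erase m
  have hJ : J.card = g - g / 2 - 2 := by
    rw [Finset.card_erase_of_mem (by rw [Finset.mem_Ioo]; omega), Nat.card_Ioo]
    omega
  have hm0 : 0 < m := by omega
  have hinsert : ∀ B ∈ J.powerset, (insert m B : Set ℕ) ⊆ Set.Ioo (g / 2) g := by
    intro B hB a ha
    rcases ha with rfl | ha
    · simp only [Set.mem_Ioo]; omega
    · simpa using Finset.mem_of_mem_erase (Finset.mem_powerset.1 hB ha)
  have hmaps : ∀ B ∈ (J.powerset : Set (Finset ℕ)),
      shift m (depthTwo g (insert m B)) ∈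
        {S : Set ℕ | IsNumericalSemigroup S ∧ frob S = m + g ∧ embDim S = mult S} := by
    intro B hB
    have hBJ := hinsert B hB
    refine shift_mem_setOf_MED (isNumericalSemigroup_depthTwo fun a ha => ?_)
      (Or.inr (Or.inl (Set.mem_insert m _))) hm0
      (isGreatest_compl_shift (Set.mem_insert 0 _)
        (isGreatest_compl_depthTwo (by omega) fun h => (hBJ h).2.false) m)
    exact (Nat.div_lt_iff_lt_mul two_pos).1 (hBJ ha).1 |>.trans_eq (mul_comm _ _)
  have hinj : Set.InjOn (fun B : Finset ℕ => shift m (depthTwo g (insert m B))) J.powerset := by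
    intro B₁ hB₁ B₂ hB₂ heq
    have hIoo : ∀ B ∈ J.powerset, (insert m B : Set ℕ) ⊆ Set.Ioo 0 g := fun B hB a ha =>
      ⟨by have := (hinsert B hB ha).1; omega, (hinsert B hB ha).2⟩
    have hT : depthTwo g (insert m B₁) = depthTwo g (insert m B₂) := by
      ext t
      rw [← add_mem_shift_iff hm0, ← add_mem_shift_iff hm0 (T := depthTwo g _)]
      exact Set.ext_iff.1 heq (m + t)
    have hins : (insert m B₁ : Finset ℕ) = insert m B₂ := by
      rw [← Finset.coe_inj, Finset.coe_insert, Finset.coe_insert,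
        ← depthTwo_inter_Ioo (hIoo B₁ hB₁), ← depthTwo_inter_Ioo (hIoo B₂ hB₂), hT]
    have hm : ∀ B ∈ J.powerset, m ∉ B := fun B hB h =>
      Finset.notMem_erase m _ (Finset.mem_powerset.1 hB h)
    rw [← Finset.erase_insert (hm B₁ hB₁), hins, Finset.erase_insert (hm B₂ hB₂)]
  calc 2 ^ (g - g / 2 - 2) = (J.powerset : Set (Finset ℕ)).ncard := by
        rw [Set.ncard_coe_finset, Finset.card_powerset, hJ]
    _ ≤ MED (m + g) := Set.ncard_le_ncard_of_injOn _ hmaps hinj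
        ((finite_setOf_frob_eq (m + g)).subset fun S hS => ⟨hS.1, hS.2.1⟩)

lemma two_rpow_le_MED {f : ℕ} (hf : 1 ≤ f) : (2 : ℝ) ^ (((f : ℝ) - 8) / 3) ≤ MED f := by
  rcases le_or_gt f 8 with hf8 | hf8
  · calc (2 : ℝ) ^ (((f : ℝ) - 8) / 3) ≤ 1 := by
          refine Real.rpow_le_one_of_one_le_of_nonpos one_le_two ?_
          have : (f : ℝ) ≤ 8 := by exact_mod_cast hf8
          linarith
      _ ≤ MED f := by exact_mod_cast MED_pos hf
  · obtain ⟨m, g, rfl, hgm, hmg, hm⟩ : ∃ m g, f = m + g ∧ g < 2 * m ∧ m < g ∧ 3 * m ≤ f + 3 :=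
      ⟨f / 3 + 1, f - (f / 3 + 1), by omega, by omega, by omega, by omega⟩
    have hk : ((m + g : ℕ) : ℝ) ≤ 3 * ((g - g / 2 - 2 : ℕ) : ℝ) + 8 := by
      exact_mod_cast (by omega : m + g ≤ 3 * (g - g / 2 - 2) + 8)
    calc (2 : ℝ) ^ ((((m + g : ℕ) : ℝ) - 8) / 3) ≤ (2 : ℝ) ^ ((g - g / 2 - 2 : ℕ) : ℝ) :=
          Real.rpow_le_rpow_of_exponent_le one_le_two (by linarith)
      _ = ((2 ^ (g - g / 2 - 2) : ℕ) : ℝ) := by norm_cast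
      _ ≤ MED (m + g) := by exact_mod_cast two_pow_le_MED hgm hmg

end NumericalSemigroup

theorem stmt_14 :
    (∃ c : ℝ, 0 < c ∧ ∀ f : ℕ, 1 ≤ f → c * 2 ^ ((f : ℝ) / 3) ≤ (MED f : ℝ)) ∧
    (∀ f : ℕ, 1 ≤ f → (2 : ℝ) ^ (-(8 : ℝ) / 3) * 2 ^ ((f : ℝ) / 3) ≤ (MED f : ℝ)) := by
  have h : ∀ f : ℕ, 1 ≤ f → (2 : ℝ) ^ (-(8 : ℝ) / 3) * 2 ^ ((f : ℝ) / 3) ≤ (MED f : ℝ) := by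
    intro f hf
    rw [← Real.rpow_add two_pos]
    convert NumericalSemigroup.two_rpow_le_MED hf using 2
    ring
  exact ⟨⟨_, by positivity, h⟩, h⟩
end

section
/- Fix integers k ≥ 1 and g ≥ k+1. The number of numerical semigroups S with genus g and 2m(S) - F(S) = k is exactly the Fibonacci number F_{g-k}. -/
open Finset

lemma fibsum (n : ℕ) : ∑ i ∈ range (n+1), Nat.choose (n - i) i = Nat.fib (n+1) := by
  induction n using Nat.strong_induction_on with
  | _ n ih =>
    match n with
    | 0 => simp
    | 1 => simp [Finset.sum_range_succ]
    | (n+2) =>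
      have h1 := ih (n+1) (by omega)
      have h0 := ih n (by omega)
      have hpt : ∀ i, i ≤ n + 1 →
          Nat.choose (n+1-i) (i+1) = Nat.choose (n-i) i + Nat.choose (n-i) (i+1) := by
        intro i hi
        rcases Nat.lt_or_ge i (n+1) with h | h
        · have : n + 1 - i = (n - i) + 1 := by omega
          rw [this, Nat.choose_succ_succ]
        · have hi' : i = n + 1 := le_antisymm hi h
          subst hi'
          have e1 : n + 1 - (n+1) = 0 := by omega
          have e2 : n - (n+1) = 0 := by omega
          rw [e1, e2, Nat.choose_eq_zero_of_lt (by omega)]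
          simp [Nat.choose_eq_zero_of_lt]
      rw [Finset.sum_range_succ' (fun i => Nat.choose (n+2-i) i) (n+2)]
      have e3 : ∀ i ∈ range (n+2), Nat.choose (n+2-(i+1)) (i+1)
          = Nat.choose (n-i) i + Nat.choose (n-i) (i+1) := by
        intro i hi
        simp only [mem_range] at hi
        have : n + 2 - (i+1) = n + 1 - i := by omega
        rw [this, hpt i (by omega)]
      rw [Finset.sum_congr rfl e3, Finset.sum_add_distrib]
      have hA : ∑ i ∈ range (n+2), Nat.choose (n-i) i = Nat.fib (n+1) := by
        rw [Finset.sum_range_succ, Nat.sub_eq_zero_of_le (by omega),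
          Nat.choose_eq_zero_of_lt (by omega), add_zero, h0]
      have hB : ∑ i ∈ range (n+2), Nat.choose (n-i) (i+1) + 1 = Nat.fib (n+2) := by
        rw [← h1, Finset.sum_range_succ' (fun i => Nat.choose (n+1-i) i) (n+1)]
        congr 1
        · rw [Finset.sum_range_succ, Nat.sub_eq_zero_of_le (by omega),
            Nat.choose_eq_zero_of_lt (by omega), add_zero]
          apply Finset.sum_congr rfl
          intro i hi; simp only [mem_range] at hi
          congr 1; omega
      have e4 : (n+2-0).choose 0 = 1 := by simp
      have e5 : Nat.fib (n+2+1) = Nat.fib (n+1+1) + Nat.fib (n+1) := by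
        rw [Nat.fib_add_two]; ring
      have e6 : Nat.fib (n+2) = Nat.fib (n+1+1) := rfl
      omega

def Sgp (m F : ℕ) (T : Finset ℕ) : Set ℕ := insert 0 (insert m (↑T ∪ Set.Ioi F))

lemma mem_Sgp_iff {m F x : ℕ} {T : Finset ℕ} :
    x ∈ Sgp m F T ↔ x = 0 ∨ x = m ∨ x ∈ T ∨ F < x := by
  simp [Sgp]

variable {m F : ℕ} {T : Finset ℕ}

lemma Sgp_compl (hmF : m < F) (hT : T ⊆ Finset.Ioo m F) :
    (Sgp m F T)ᶜ = ↑(((Finset.Icc 1 F).erase m) \ T) := by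
  ext x
  simp only [Set.mem_compl_iff, mem_Sgp_iff, Finset.coe_sdiff, Set.mem_diff,
    Finset.mem_coe, Finset.mem_erase, Finset.mem_Icc]
  push_neg
  constructor
  · rintro ⟨h0, hm, hT', hF⟩
    exact ⟨⟨hm, by omega, by omega⟩, hT'⟩
  · rintro ⟨⟨hm, h1, hF⟩, hT'⟩
    exact ⟨by omega, hm, hT', by omega⟩

lemma Sgp_mem_ge (hT : T ⊆ Finset.Ioo m F) (hmF : m < F) :
    ∀ x ∈ Sgp m F T, x = 0 ∨ m ≤ x := by
  intro x hx
  rcases mem_Sgp_iff.mp hx with h | h | h | h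
  · exact Or.inl h
  · exact Or.inr h.ge
  · have := hT h; simp only [Finset.mem_Ioo] at this; omega
  · omega

lemma Sgp_ns (hmF : m < F) (hF2 : F < 2*m) (hT : T ⊆ Finset.Ioo m F) :
    IsNumericalSemigroup (Sgp m F T) := by
  refine ⟨mem_Sgp_iff.mpr (Or.inl rfl), ?_, ?_⟩
  · intro a ha b hb
    rcases Sgp_mem_ge hT hmF a ha with h | h
    · subst h; simpa using hb
    rcases Sgp_mem_ge hT hmF b hb with h' | h'
    · subst h'; simpa using ha
    exact mem_Sgp_iff.mpr (Or.inr (Or.inr (Or.inr (by omega))))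
  · rw [Sgp_compl hmF hT]
    exact Finset.finite_toSet _

lemma Sgp_mult (hmF : m < F) (hF2 : F < 2*m) (hT : T ⊆ Finset.Ioo m F) :
    mult (Sgp m F T) = m := by
  have hm0 : m ≠ 0 := by omega
  have hmm : m ∈ Sgp m F T \ {0} :=
    ⟨mem_Sgp_iff.mpr (Or.inr (Or.inl rfl)), by simpa using hm0⟩
  refine le_antisymm (Nat.sInf_le hmm) (le_csInf ⟨m, hmm⟩ ?_)
  rintro b ⟨hb, hb0⟩
  simp only [Set.mem_singleton_iff] at hb0
  rcases Sgp_mem_ge hT hmF b hb with h | h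
  · exact absurd h hb0
  · exact h

lemma Sgp_frob (hmF : m < F) (hT : T ⊆ Finset.Ioo m F) :
    frob (Sgp m F T) = F := by
  rw [frob, Sgp_compl hmF hT]
  have hFmem : F ∈ (((Finset.Icc 1 F).erase m) \ T : Finset ℕ) := by
    simp only [Finset.mem_sdiff, Finset.mem_erase, Finset.mem_Icc]
    refine ⟨⟨by omega, by omega, le_rfl⟩, fun h => ?_⟩
    have := hT h; simp only [Finset.mem_Ioo] at this; omega
  have hub : ∀ x ∈ ((((Finset.Icc 1 F).erase m) \ T : Finset ℕ) : Set ℕ), x ≤ F := by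
    intro x hx
    simp only [Finset.coe_sdiff, Set.mem_diff, Finset.mem_coe, Finset.mem_erase,
      Finset.mem_Icc] at hx
    exact hx.1.2.2
  exact le_antisymm (csSup_le ⟨F, hFmem⟩ hub) (le_csSup ⟨F, hub⟩ hFmem)

lemma Sgp_genus (hmF : m < F) (hF2 : F < 2*m) (hT : T ⊆ Finset.Ioo m F) :
    genus (Sgp m F T) = F - 1 - T.card := by
  rw [genus, Sgp_compl hmF hT, Set.ncard_coe_finset]
  have hsub : T ⊆ (Finset.Icc 1 F).erase m := by
    intro x hx
    have := hT hx; simp only [Finset.mem_Ioo] at this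
    simp only [Finset.mem_erase, Finset.mem_Icc]
    omega
  rw [Finset.card_sdiff_of_subset hsub, Finset.card_erase_of_mem (by simp [Finset.mem_Icc]; omega),
    Nat.card_Icc]
  omega

lemma Sgp_inter (hmF : m < F) (hT : T ⊆ Finset.Ioo m F) :
    Sgp m F T ∩ Set.Ioo m F = ↑T := by
  ext x
  simp only [Set.mem_inter_iff, mem_Sgp_iff, Set.mem_Ioo, Finset.mem_coe]
  constructor
  · rintro ⟨h | h | h | h, h1, h2⟩ <;> first | omega | exact h
  · intro h
    have := hT h; simp only [Finset.mem_Ioo] at this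
    exact ⟨Or.inr (Or.inr (Or.inl h)), this.1, this.2⟩

theorem stmt_15 (k g : ℕ) (hk : 1 ≤ k) (hg : k + 1 ≤ g) :
    Set.ncard {S : Set ℕ | IsNumericalSemigroup S ∧ genus S = g ∧
      2 * mult S = frob S + k} = Nat.fib (g - k) := by
  classical
  set I : Finset ((_ : ℕ) × Finset ℕ) :=
    ((Finset.range (g-k)).filter (fun j => g ≤ k+2*j+1)).sigma
      (fun j => (Finset.Ioo (k+1+j) (k+2+2*j)).powersetCard (k+2*j+1-g)) with hI
  have hImem : ∀ p : (_ : ℕ) × Finset ℕ, p ∈ I ↔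
      (p.1 < g - k ∧ g ≤ k + 2*p.1 + 1) ∧
      p.2 ⊆ Finset.Ioo (k+1+p.1) (k+2+2*p.1) ∧ p.2.card = k+2*p.1+1-g := by
    intro p
    simp [hI, Finset.mem_sigma, Finset.mem_filter, Finset.mem_powersetCard, and_assoc]
  have hset : {S : Set ℕ | IsNumericalSemigroup S ∧ genus S = g ∧ 2 * mult S = frob S + k}
      = (fun p : (_ : ℕ) × Finset ℕ => Sgp (k+1+p.1) (k+2+2*p.1) p.2) '' ↑I := by
    ext S
    simp only [Set.mem_setOf_eq, Set.mem_image, Finset.mem_coe]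
    constructor
    · rintro ⟨⟨h0S, hadd, hfin⟩, hgen, hmf⟩
      have hcne : Sᶜ.Nonempty := by
        rw [Set.nonempty_iff_ne_empty]
        intro h
        rw [genus, h] at hgen
        simp at hgen
        omega
      have hbdd : BddAbove Sᶜ := hfin.bddAbove
      have hFc : frob S ∉ S := Nat.sSup_mem hcne hbdd
      have hFub : ∀ x, x ∉ S → x ≤ frob S := fun x hx => le_csSup hbdd hx
      have hF1 : frob S + 1 ∈ S := by
        by_contra h
        have := hFub _ h
        omega
      have hSne : (S \ {0}).Nonempty := ⟨frob S + 1, hF1, by simp⟩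
      have hmS : mult S ∈ S \ {0} := Nat.sInf_mem hSne
      have hmlb : ∀ x ∈ S, x ≠ 0 → mult S ≤ x := fun x hx h0 => Nat.sInf_le ⟨hx, by simpa⟩
      set m := mult S with hm
      set F := frob S with hF
      have hF0 : F ≠ 0 := fun h => hFc (h ▸ h0S)
      have hmF : m < F := by
        by_contra hle
        push_neg at hle
        have hcomp : Sᶜ = ↑(Finset.Icc 1 F) := by
          ext x
          simp only [Set.mem_compl_iff, Finset.coe_Icc, Set.mem_Icc]
          constructor
          · intro hx
            have hx0 : x ≠ 0 := fun h => hx (h ▸ h0S)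
            exact ⟨by omega, hFub x hx⟩
          · rintro ⟨h1, h2⟩ hxS
            have := hmlb x hxS (by omega)
            have : x = F := by omega
            exact hFc (this ▸ hxS)
        have : genus S = F := by
          rw [genus, hcomp, Set.ncard_coe_finset, Nat.card_Icc]
          omega
        omega
      have hF2 : F < 2*m := by omega
      set T := (Finset.Ioo m F).filter (· ∈ S) with hTdef
      have hT : T ⊆ Finset.Ioo m F := Finset.filter_subset _ _
      have hSeq : S = Sgp m F T := by
        ext x
        rw [mem_Sgp_iff]
        constructor
        · intro hx
          rcases eq_or_ne x 0 with h | h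
          · exact Or.inl h
          by_cases hxF : F < x
          · exact Or.inr (Or.inr (Or.inr hxF))
          rcases eq_or_ne x m with h' | h'
          · exact Or.inr (Or.inl h')
          have hmx := hmlb x hx h
          have hxne : x ≠ F := fun hh => hFc (hh ▸ hx)
          refine Or.inr (Or.inr (Or.inl ?_))
          rw [hTdef, Finset.mem_filter, Finset.mem_Ioo]
          exact ⟨⟨by omega, by omega⟩, hx⟩
        · rintro (h | h | h | h)
          · exact h ▸ h0S
          · exact h ▸ hmS.1
          · exact (Finset.mem_filter.mp h).2
          · by_contra hxS
            have := hFub x hxS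
            omega
      rw [hSeq] at hgen
      rw [Sgp_genus hmF hF2 hT] at hgen
      have hTcard : T.card ≤ F - m - 1 := by
        have := Finset.card_le_card hT
        rwa [Nat.card_Ioo] at this
      have e1 : k+1+(m-(k+1)) = m := by omega
      have e2 : k+2+2*(m-(k+1)) = F := by omega
      refine ⟨⟨m - (k+1), T⟩, ?_, ?_⟩
      · rw [hImem]
        dsimp only
        refine ⟨⟨by omega, by omega⟩, by simpa only [e1, e2] using hT, by omega⟩
      · show Sgp (k+1+(m-(k+1))) (k+2+2*(m-(k+1))) T = S
        rw [e1, e2, ← hSeq]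
    · rintro ⟨p, hp, rfl⟩
      obtain ⟨j, T⟩ := p
      rw [hImem] at hp
      obtain ⟨⟨hj, hjg⟩, hT, hTc⟩ := hp
      dsimp only at hj hjg hT hTc
      have hmF : k+1+j < k+2+2*j := by omega
      have hF2 : k+2+2*j < 2*(k+1+j) := by omega
      refine ⟨Sgp_ns hmF hF2 hT, ?_, ?_⟩
      · rw [Sgp_genus hmF hF2 hT, hTc]
        omega
      · rw [Sgp_mult hmF hF2 hT, Sgp_frob hmF hT]
        omega
  have hinj : Set.InjOn (fun p : (_ : ℕ) × Finset ℕ => Sgp (k+1+p.1) (k+2+2*p.1) p.2) ↑I := by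
    rintro ⟨j1, T1⟩ h1 ⟨j2, T2⟩ h2 heq
    simp only [Finset.mem_coe, hImem] at h1 h2
    obtain ⟨⟨hj1, hjg1⟩, hT1, hTc1⟩ := h1
    obtain ⟨⟨hj2, hjg2⟩, hT2, hTc2⟩ := h2
    have hmF1 : k+1+j1 < k+2+2*j1 := by omega
    have hF21 : k+2+2*j1 < 2*(k+1+j1) := by omega
    have hmF2 : k+1+j2 < k+2+2*j2 := by omega
    have hF22 : k+2+2*j2 < 2*(k+1+j2) := by omega
    simp only at heq
    have hjeq : j1 = j2 := by
      have := congrArg mult heq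
      rw [Sgp_mult hmF1 hF21 hT1, Sgp_mult hmF2 hF22 hT2] at this
      omega
    subst hjeq
    have hTeq : T1 = T2 := by
      apply Finset.coe_injective
      rw [← Sgp_inter hmF1 hT1, ← Sgp_inter hmF1 hT2, heq]
    subst hTeq
    rfl
  rw [hset, Set.ncard_image_of_injOn hinj, Set.ncard_coe_finset, hI, Finset.card_sigma]
  have hcard : ∀ j ∈ (range (g-k)).filter (fun j => g ≤ k+2*j+1),
      ((Finset.Ioo (k+1+j) (k+2+2*j)).powersetCard (k+2*j+1-g)).card
        = Nat.choose j (k+2*j+1-g) := by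
    intro j hj
    rw [Finset.card_powersetCard, Nat.card_Ioo]
    congr 1
    omega
  rw [Finset.sum_congr rfl hcard, Finset.sum_filter]
  have hpt : ∀ j ∈ range (g-k),
      (if g ≤ k+2*j+1 then Nat.choose j (k+2*j+1-g) else 0)
        = Nat.choose j (g-k-1-j) := by
    intro j hj
    simp only [mem_range] at hj
    split_ifs with h
    · have hr : k+2*j+1-g ≤ j := by omega
      rw [← Nat.choose_symm hr]
      congr 1
      omega
    · rw [Nat.choose_eq_zero_of_lt (by omega)]
  rw [Finset.sum_congr rfl hpt]
  obtain ⟨n, hn⟩ : ∃ n, g - k = n + 1 := ⟨g-k-1, by omega⟩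
  rw [hn]
  have hrefl : ∑ j ∈ range (n+1), Nat.choose j (n+1-1-j)
      = ∑ j ∈ range (n+1), (fun i => Nat.choose (n-i) i) ((n+1)-1-j) := by
    apply Finset.sum_congr rfl
    intro j hj
    simp only [mem_range] at hj
    simp only
    congr 1 <;> omega
  exact hrefl.trans ((Finset.sum_range_reflect (fun i => Nat.choose (n-i) i) (n+1)).trans (fibsum n))
end

section
/- The number of numerical semigroups of genus g and depth 2 is F_{g+1} - 1, where F_n is the n-th Fibonacci number. -/
open Finset

namespace Stmt16Aux

open scoped Classical

/-- The semigroup with multiplicity `m` and middle part `T ⊆ (m, 2m)`. -/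
def semiOf (m : ℕ) (T : Finset ℕ) : Set ℕ :=
  {x | x = 0 ∨ x = m ∨ x ∈ T ∨ 2 * m ≤ x}

lemma mem_semiOf {m : ℕ} {T : Finset ℕ} {x : ℕ} :
    x ∈ semiOf m T ↔ x = 0 ∨ x = m ∨ x ∈ T ∨ 2 * m ≤ x := Iff.rfl

variable {m g x : ℕ} {T : Finset ℕ}

lemma le_of_mem (hT : T ⊆ Ioo m (2 * m)) (hx : x ∈ semiOf m T) (h0 : x ≠ 0) : m ≤ x := by
  rcases hx with rfl | rfl | h | h
  · exact absurd rfl h0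
  · exact le_rfl
  · have := hT h; rw [mem_Ioo] at this; omega
  · omega

lemma semiOf_isNS (_hm : 2 ≤ m) (hT : T ⊆ Ioo m (2 * m)) :
    IsNumericalSemigroup (semiOf m T) := by
  refine ⟨Or.inl rfl, ?_, ?_⟩
  · intro a ha b hb
    rcases eq_or_ne a 0 with rfl | ha0
    · simpa using hb
    rcases eq_or_ne b 0 with rfl | hb0
    · simpa using ha
    have hA := le_of_mem hT ha ha0
    have hB := le_of_mem hT hb hb0
    exact Or.inr (Or.inr (Or.inr (by omega)))
  · apply Set.Finite.subset (Set.finite_Iio (2 * m))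
    intro y hy
    simp only [Set.mem_compl_iff, mem_semiOf, not_or, not_le] at hy
    exact hy.2.2.2

lemma compl_semiOf (hT : T ⊆ Ioo m (2 * m)) :
    (semiOf m T)ᶜ = ↑(Ico 1 m ∪ (Ioo m (2 * m) \ T)) := by
  ext y
  by_cases hy : y ∈ T
  · have := hT hy; rw [mem_Ioo] at this
    simp [semiOf, hy, this]
    omega
  · simp [semiOf, hy]
    omega

lemma mult_semiOf (hm : 2 ≤ m) (hT : T ⊆ Ioo m (2 * m)) : mult (semiOf m T) = m := by
  have hmem : m ∈ semiOf m T \ {0} := ⟨Or.inr (Or.inl rfl), by simp; omega⟩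
  refine le_antisymm (Nat.sInf_le hmem) (le_csInf ⟨m, hmem⟩ ?_)
  rintro y ⟨hy, hy0⟩
  exact le_of_mem hT hy (by simpa using hy0)

lemma one_mem_compl (hm : 2 ≤ m) (hT : T ⊆ Ioo m (2 * m)) : (1 : ℕ) ∈ (semiOf m T)ᶜ := by
  rw [compl_semiOf hT]
  simp
  omega

lemma frob_lt (hm : 2 ≤ m) (hT : T ⊆ Ioo m (2 * m)) : frob (semiOf m T) < 2 * m := by
  have hne : ((semiOf m T)ᶜ).Nonempty := ⟨1, one_mem_compl hm hT⟩
  have : frob (semiOf m T) ≤ 2 * m - 1 := by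
    apply csSup_le hne
    intro y hy
    rw [compl_semiOf hT] at hy
    simp at hy
    omega
  omega

lemma frob_ge (hm : 2 ≤ m) (hT : T ⊆ Ioo m (2 * m)) (hc : T.card + 1 < m) :
    m < frob (semiOf m T) := by
  have hsub : ¬ Ioo m (2 * m) ⊆ T := by
    intro h
    have := Finset.card_le_card h
    rw [Nat.card_Ioo] at this
    omega
  obtain ⟨y, hy, hyT⟩ := Finset.not_subset.mp hsub
  have hyC : y ∈ (semiOf m T)ᶜ := by
    rw [compl_semiOf hT]
    simp only [coe_union, coe_sdiff, Set.mem_union, Set.mem_diff, mem_coe]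
    exact Or.inr ⟨hy, hyT⟩
  have hb : BddAbove ((semiOf m T)ᶜ) := (semiOf_isNS hm hT).2.2.bddAbove
  have := le_csSup hb hyC
  rw [mem_Ioo] at hy
  have : m < y := hy.1
  calc m < y := hy.1
    _ ≤ frob (semiOf m T) := le_csSup hb hyC

lemma depth_semiOf (hm : 2 ≤ m) (hT : T ⊆ Ioo m (2 * m)) (hc : T.card + 1 < m) :
    depth (semiOf m T) = 2 := by
  have h1 := frob_ge hm hT hc
  have h2 := frob_lt hm hT
  rw [depth, mult_semiOf hm hT]
  apply Nat.div_eq_of_lt_le <;> omega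

lemma genus_semiOf (hm : 2 ≤ m) (hT : T ⊆ Ioo m (2 * m)) :
    genus (semiOf m T) = (m - 1) + ((m - 1) - T.card) := by
  rw [genus, compl_semiOf hT, Set.ncard_coe_finset]
  rw [Finset.card_union_of_disjoint, Nat.card_Ico, Finset.card_sdiff_of_subset hT, Nat.card_Ioo]
  · omega
  · rw [Finset.disjoint_left]
    intro a ha hb
    rw [mem_Ico] at ha
    have := (mem_sdiff.mp hb).1
    rw [mem_Ioo] at this
    omega

lemma mem_T_iff (hm : 2 ≤ m) (hT : T ⊆ Ioo m (2 * m)) :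
    x ∈ T ↔ x ∈ Ioo m (2 * m) ∧ x ∈ semiOf m T := by
  constructor
  · exact fun h => ⟨hT h, Or.inr (Or.inr (Or.inl h))⟩
  · rintro ⟨hx, h⟩
    rw [mem_Ioo] at hx
    rcases h with rfl | rfl | h | h
    · omega
    · omega
    · exact h
    · omega

/-- The index set: pairs `(m, T)`. -/
def idx (g : ℕ) : Finset ((_ : ℕ) × Finset ℕ) :=
  (Icc 2 g).sigma fun m =>
    (Ioo m (2 * m)).powerset.filter fun T => g + T.card + 2 = 2 * m

lemma mem_idx {p : (_ : ℕ) × Finset ℕ} :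
    p ∈ idx g ↔ 2 ≤ p.1 ∧ p.1 ≤ g ∧ p.2 ⊆ Ioo p.1 (2 * p.1) ∧
      g + p.2.card + 2 = 2 * p.1 := by
  simp [idx, mem_sigma, mem_Icc, mem_filter, mem_powerset]
  tauto

lemma semiOf_mem_of_idx {p : (_ : ℕ) × Finset ℕ} (hp : p ∈ idx g) :
    IsNumericalSemigroup (semiOf p.1 p.2) ∧ genus (semiOf p.1 p.2) = g ∧
      depth (semiOf p.1 p.2) = 2 := by
  obtain ⟨h2, hg, hT, heq⟩ := mem_idx.mp hp
  have hc : p.2.card + 1 < p.1 := by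
    have : p.2.card ≤ (Ioo p.1 (2 * p.1)).card := Finset.card_le_card hT
    rw [Nat.card_Ioo] at this
    omega
  refine ⟨semiOf_isNS h2 hT, ?_, depth_semiOf h2 hT hc⟩
  rw [genus_semiOf h2 hT]
  omega

/-- Classification: every depth-2 genus-g numerical semigroup is `semiOf m T` for a unique
index. -/
lemma classify {S : Set ℕ} (hS : IsNumericalSemigroup S) (hg : genus S = g)
    (hd : depth S = 2) : ∃ p ∈ idx g, S = semiOf p.1 p.2 := by
  obtain ⟨h0, hcl, hfin⟩ := hS
  -- multiplicity basics
  have hSinf : S.Infinite := by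
    have := hfin.infinite_compl
    rwa [compl_compl] at this
  have hne : (S \ {0}).Nonempty := (hSinf.diff (Set.finite_singleton 0)).nonempty
  set m := mult S with hm_def
  have hmem : m ∈ S \ {0} := Nat.sInf_mem hne
  have hmS : m ∈ S := hmem.1
  have hm0 : m ≠ 0 := by simpa using hmem.2
  have hmlb : ∀ x ∈ S, x ≠ 0 → m ≤ x := fun x hx hx0 => Nat.sInf_le ⟨hx, by simpa using hx0⟩
  -- m ≥ 2
  have hm2 : 2 ≤ m := by
    by_contra h
    have hm1 : m = 1 := by omega
    have hall : ∀ n, n ∈ S := by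
      intro n
      induction n with
      | zero => exact h0
      | succ k ih => exact hcl k ih 1 (hm1 ▸ hmS)
    have hcompl : Sᶜ = ∅ := by
      ext y; simp [hall y]
    have hf0 : frob S = 0 := by rw [frob, hcompl]; exact csSup_empty
    rw [depth, hf0, ← hm_def, hm1] at hd
    simp at hd
  -- frobenius bounds from depth
  have hone : (1 : ℕ) ∈ Sᶜ := by
    intro h1S
    have := hmlb 1 h1S one_ne_zero
    omega
  have hcne : (Sᶜ).Nonempty := ⟨1, hone⟩
  have hbdd : BddAbove Sᶜ := hfin.bddAbove
  have hfmem : frob S ∈ Sᶜ := Nat.sSup_mem hcne hbdd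
  have hfub : ∀ x ∈ Sᶜ, x ≤ frob S := fun x hx => le_csSup hbdd hx
  rw [depth, ← hm_def] at hd
  have hd1 : 2 * m ≤ frob S + m := by
    calc 2 * m = ((frob S + m) / m) * m := by rw [hd]
    _ ≤ frob S + m := Nat.div_mul_le_self _ _
  have hd2 : frob S + m < 3 * m := by
    have : (frob S + m) / m < 3 := by omega
    rwa [Nat.div_lt_iff_lt_mul (by omega : 0 < m)] at this
  have hfm : m ≤ frob S := by omega
  have hf2m : frob S < 2 * m := by omega
  -- the middle part
  set T : Finset ℕ := (Ioo m (2 * m)).filter (fun y => y ∈ S) with hT_def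
  have hT : T ⊆ Ioo m (2 * m) := filter_subset _ _
  have hTS : ∀ y ∈ T, y ∈ S := fun y hy => (mem_filter.mp hy).2
  have h2mS : ∀ y, 2 * m ≤ y → y ∈ S := by
    intro y hy
    by_contra hyS
    have := hfub y hyS
    omega
  have hSeq : S = semiOf m T := by
    ext y
    rw [mem_semiOf]
    constructor
    · intro hyS
      rcases eq_or_ne y 0 with rfl | hy0
      · exact Or.inl rfl
      rcases eq_or_ne y m with rfl | hym
      · exact Or.inr (Or.inl rfl)
      have hym' := hmlb y hyS hy0
      rcases lt_or_ge y (2 * m) with hlt | hge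
      · exact Or.inr (Or.inr (Or.inl (mem_filter.mpr ⟨mem_Ioo.mpr ⟨by omega, hlt⟩, hyS⟩)))
      · exact Or.inr (Or.inr (Or.inr hge))
    · rintro (rfl | rfl | h | h)
      · exact h0
      · exact hmS
      · exact hTS y h
      · exact h2mS y h
  -- frob S is a gap in (m, 2m) not in T
  have hfT : frob S ∉ T := fun h => hfmem (hTS _ h)
  have hfIoo : frob S ∈ Ioo m (2 * m) := by
    rw [mem_Ioo]
    constructor
    · rcases eq_or_lt_of_le hfm with h | h
      · exact absurd hmS (h ▸ hfmem)
      · exact h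
    · exact hf2m
  have hcard : T.card + 1 < m := by
    have h1 : T.card < (Ioo m (2 * m)).card := by
      apply Finset.card_lt_card
      exact ⟨hT, fun h => hfT (h hfIoo)⟩
    have h2 : (Ioo m (2 * m) \ T).Nonempty := ⟨frob S, mem_sdiff.mpr ⟨hfIoo, hfT⟩⟩
    rw [Nat.card_Ioo] at h1
    -- T.card < m - 1, need T.card + 1 < m, i.e. T.card ≤ m - 2
    omega
  -- genus computation
  have hgen : g = (m - 1) + ((m - 1) - T.card) := by
    rw [← hg, hSeq, genus_semiOf hm2 hT]
  have hTle : T.card ≤ m - 2 := by omega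
  have hm_le : m ≤ g := by omega
  have heq2 : g + T.card + 2 = 2 * m := by omega
  exact ⟨⟨m, T⟩, mem_idx.mpr ⟨hm2, hm_le, hT, heq2⟩, hSeq⟩

lemma inj_on : Set.InjOn (fun p : (_ : ℕ) × Finset ℕ => semiOf p.1 p.2) ↑(idx g) := by
  intro p hp q hq heq
  rw [mem_coe, mem_idx] at hp hq
  simp only at heq
  have hm : p.1 = q.1 := by
    rw [← mult_semiOf hp.1 hp.2.2.1, ← mult_semiOf hq.1 hq.2.2.1, heq]
  have hTeq : p.2 = q.2 := by
    ext y
    rw [mem_T_iff hp.1 hp.2.2.1, mem_T_iff hq.1 hq.2.2.1, heq, hm]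
  exact Sigma.ext hm (heq_of_eq hTeq)

lemma set_eq : {S : Set ℕ | IsNumericalSemigroup S ∧ genus S = g ∧ depth S = 2} =
    ↑((idx g).image fun p => semiOf p.1 p.2) := by
  ext S
  simp only [Set.mem_setOf_eq, coe_image, Set.mem_image, mem_coe]
  constructor
  · rintro ⟨h1, h2, h3⟩
    obtain ⟨p, hp, hSp⟩ := classify h1 h2 h3
    exact ⟨p, hp, hSp.symm⟩
  · rintro ⟨p, hp, rfl⟩
    exact semiOf_mem_of_idx hp

lemma card_fiber (hm2 : 2 ≤ m) (hmg : m ≤ g) :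
    ((Ioo m (2 * m)).powerset.filter fun T => g + T.card + 2 = 2 * m).card =
      (m - 1).choose (g + 1 - m) := by
  by_cases h : g + 2 ≤ 2 * m
  · have : ((Ioo m (2 * m)).powerset.filter fun T => g + T.card + 2 = 2 * m) =
        (Ioo m (2 * m)).powersetCard (2 * m - g - 2) := by
      ext T
      rw [mem_filter, mem_powerset, mem_powersetCard]
      constructor
      · rintro ⟨h1, h2⟩; exact ⟨h1, by omega⟩
      · rintro ⟨h1, h2⟩; exact ⟨h1, by omega⟩
    rw [this, Finset.card_powersetCard, Nat.card_Ioo]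
    have h1 : 2 * m - m - 1 = m - 1 := by omega
    have h2 : g + 1 - m = (m - 1) - (2 * m - g - 2) := by omega
    rw [h1, h2, Nat.choose_symm (by omega)]
  · have : ((Ioo m (2 * m)).powerset.filter fun T => g + T.card + 2 = 2 * m) = ∅ := by
      rw [Finset.filter_eq_empty_iff]
      intro T _
      omega
    rw [this, Finset.card_empty, Nat.choose_eq_zero_of_lt (by omega)]

lemma sum_eq_fib : (∑ m ∈ Icc 2 g, (m - 1).choose (g + 1 - m)) = Nat.fib (g + 1) - 1 := by
  rcases Nat.eq_zero_or_pos g with rfl | hg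
  · simp
  -- fib (g+1) = ∑ k in range (g+1), choose k (g - k)
  have hfib : Nat.fib (g + 1) = ∑ k ∈ range (g + 1), Nat.choose k (g - k) := by
    rw [Nat.fib_succ_eq_sum_choose, Finset.Nat.sum_antidiagonal_eq_sum_range_succ_mk]
  obtain ⟨g', rfl⟩ : ∃ g', g = g' + 1 := ⟨g - 1, by omega⟩
  rw [hfib, Finset.sum_range_succ]
  have hlast : (g' + 1).choose (g' + 1 - (g' + 1)) = 1 := by simp
  rw [hlast, Finset.sum_range_succ']
  have h0 : Nat.choose 0 (g' + 1 - 0) = 0 := Nat.choose_eq_zero_of_lt (by omega)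
  rw [h0]
  have : (∑ m ∈ Icc 2 (g' + 1), (m - 1).choose (g' + 1 + 1 - m)) =
      ∑ i ∈ range g', (i + 1).choose (g' + 1 - (i + 1)) := by
    apply Finset.sum_nbij' (i := fun m => m - 2) (j := fun i => i + 2)
    · intro a ha; rw [mem_Icc] at ha; rw [mem_range]; omega
    · intro a ha; rw [mem_range] at ha; rw [mem_Icc]; omega
    · intro a ha; rw [mem_Icc] at ha; omega
    · intro a ha; rw [mem_range] at ha; omega
    · intro a ha; rw [mem_Icc] at ha
      congr 1 <;> omega
  rw [this]
  omega

end Stmt16Aux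

theorem stmt_16 (g : ℕ) :
    Set.ncard {S : Set ℕ | IsNumericalSemigroup S ∧ genus S = g ∧ depth S = 2} =
      Nat.fib (g + 1) - 1 := by
  classical
  rw [Stmt16Aux.set_eq, Set.ncard_coe_finset, Finset.card_image_of_injOn Stmt16Aux.inj_on,
    Stmt16Aux.idx, Finset.card_sigma]
  have hcong : (∑ m ∈ Finset.Icc 2 g,
      ((Finset.Ioo m (2 * m)).powerset.filter fun T => g + T.card + 2 = 2 * m).card) =
      ∑ m ∈ Finset.Icc 2 g, (m - 1).choose (g + 1 - m) := by
    refine Finset.sum_congr rfl fun m hm => ?_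
    rw [Finset.mem_Icc] at hm
    exact Stmt16Aux.card_fiber hm.1 hm.2
  rw [hcong]
  exact Stmt16Aux.sum_eq_fib
end
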